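/- For every integer p ≥ 2 and every complex number s with Re s > 0, the function x ↦ x^{2s−1}·( coth(px)/sinh(2x) − 1/(2p·sinh²(x)) ) is integrable on the interval (0, ∞). -/

import Mathlib

open Real Complex MeasureTheory

/-- The elliptic fixed-point integrand `g_p(x) = coth(px)/sinh(2x) - 1/(2p sinh²x)`. -/
noncomputable def ellipticIntegrand (p : ℕ) (x : ℝ) : ℝ :=
  Real.cosh (p * x) / Real.sinh (p * x) / Real.sinh (2 * x) -
    1 / (2 * p * Real.sinh x ^ 2)

/-!
Over the common denominator `2p sinh(px) sinh²x cosh x` the numerator of `g_p` is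
`N(x) = p sinh x cosh(px) - cosh x sinh(px)`, with `N(0) = 0` and
`N'(x) = (p² - 1) sinh x sinh(px)`, which is nonnegative and increasing on `[0, ∞)` when `p ≥ 1`.
The mean value theorem thus gives `0 ≤ N(x) ≤ x N'(x)`, whence
`0 ≤ g_p(x) ≤ (p² - 1) x / (p sinh 2x) ≤ (p² - 1)/p · e^{-x}`, and the Mellin integral is
dominated by a Gamma integral.
-/

open Set

lemma integrableOn_cpow_mul_of_norm_le_exp {f : ℝ → ℂ}
    (hf : AEStronglyMeasurable f (volume.restrict (Ioi 0))) {C : ℝ}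
    (hbound : ∀ x > 0, ‖f x‖ ≤ C * Real.exp (-x)) {a : ℂ} (ha : -1 < a.re) :
    IntegrableOn (fun x : ℝ => (x : ℂ) ^ a * f x) (Ioi 0) := by
  have hGamma := (Real.GammaIntegral_convergent (s := a.re + 1) (by linarith)).const_mul C
  refine hGamma.mono' ?_ ?_
  · have : Measurable fun x : ℝ => (x : ℂ) ^ a := by fun_prop
    exact this.aestronglyMeasurable.mul hf
  · filter_upwards [ae_restrict_mem measurableSet_Ioi] with x (hx : 0 < x)
    rw [norm_mul, norm_cpow_eq_rpow_re_of_pos hx, add_sub_cancel_right]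
    calc x ^ a.re * ‖f x‖ ≤ x ^ a.re * (C * Real.exp (-x)) := by
          gcongr
          exact hbound x hx
      _ = C * (Real.exp (-x) * x ^ a.re) := by ring

lemma mul_exp_le_sinh_two_mul {x : ℝ} (hx : 0 ≤ x) : x * Real.exp x ≤ Real.sinh (2 * x) := by
  have hexp : Real.exp x ≤ 2 * Real.cosh x := by
    rw [Real.cosh_eq]
    linarith [Real.exp_pos (-x)]
  rw [Real.sinh_two_mul]
  calc x * Real.exp x ≤ Real.sinh x * (2 * Real.cosh x) := by
        gcongr
        exact Real.self_le_sinh_iff.2 hx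
    _ = 2 * Real.sinh x * Real.cosh x := by ring

noncomputable def ellipticNumerator (p x : ℝ) : ℝ :=
  p * Real.sinh x * Real.cosh (p * x) - Real.cosh x * Real.sinh (p * x)

lemma hasDerivAt_ellipticNumerator (p x : ℝ) :
    HasDerivAt (ellipticNumerator p) ((p ^ 2 - 1) * (Real.sinh x * Real.sinh (p * x))) x := by
  have hpx : HasDerivAt (fun y : ℝ => p * y) p x := by
    simpa using (hasDerivAt_id x).const_mul p
  have h := (((Real.hasDerivAt_sinh x).const_mul p).mul ((Real.hasDerivAt_cosh _).comp x hpx)).sub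
    ((Real.hasDerivAt_cosh x).mul ((Real.hasDerivAt_sinh _).comp x hpx))
  refine h.congr_deriv ?_
  simp only [Function.comp_apply]
  ring

lemma ellipticNumerator_mem_Icc {p x : ℝ} (hp : 1 ≤ p) (hx : 0 < x) :
    ellipticNumerator p x ∈ Icc 0 ((p ^ 2 - 1) * x * (Real.sinh x * Real.sinh (p * x))) := by
  obtain ⟨c, ⟨hc0, hcx⟩, hc⟩ := exists_hasDerivAt_eq_slope (ellipticNumerator p) _ hx
    (fun y _ => (hasDerivAt_ellipticNumerator p y).continuousAt.continuousWithinAt)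
    (fun y _ => hasDerivAt_ellipticNumerator p y)
  have hN : ellipticNumerator p x = x * ((p ^ 2 - 1) * (Real.sinh c * Real.sinh (p * c))) := by
    rw [hc, show ellipticNumerator p 0 = 0 by simp [ellipticNumerator], sub_zero, sub_zero,
      mul_div_cancel₀ _ hx.ne']
  have hp2 : 0 ≤ p ^ 2 - 1 := by nlinarith
  have hsc : 0 ≤ Real.sinh c := Real.sinh_nonneg_iff.2 hc0.le
  have hspc : 0 ≤ Real.sinh (p * c) := Real.sinh_nonneg_iff.2 (by positivity)
  have hmono : Real.sinh c * Real.sinh (p * c) ≤ Real.sinh x * Real.sinh (p * x) :=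
    mul_le_mul (Real.sinh_le_sinh.2 hcx.le) (Real.sinh_le_sinh.2 (by gcongr)) hspc
      (Real.sinh_nonneg_iff.2 hx.le)
  rw [hN]
  constructor
  · positivity
  · calc x * ((p ^ 2 - 1) * (Real.sinh c * Real.sinh (p * c)))
        ≤ x * ((p ^ 2 - 1) * (Real.sinh x * Real.sinh (p * x))) := by gcongr
      _ = (p ^ 2 - 1) * x * (Real.sinh x * Real.sinh (p * x)) := by ring

lemma ellipticIntegrand_eq_ellipticNumerator_div {p : ℕ} (hp : 0 < p) {x : ℝ} (hx : 0 < x) :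
    ellipticIntegrand p x =
      ellipticNumerator p x / (2 * p * Real.sinh (p * x) * Real.sinh x ^ 2 * Real.cosh x) := by
  have hsx : Real.sinh x ≠ 0 := (Real.sinh_pos_iff.2 hx).ne'
  have hspx : Real.sinh (p * x) ≠ 0 := (Real.sinh_pos_iff.2 (by positivity)).ne'
  have hcx : Real.cosh x ≠ 0 := (Real.cosh_pos x).ne'
  rw [ellipticIntegrand, ellipticNumerator, Real.sinh_two_mul]
  field_simp

lemma abs_ellipticIntegrand_le {p : ℕ} (hp : 1 ≤ p) {x : ℝ} (hx : 0 < x) :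
    |ellipticIntegrand p x| ≤ ((p : ℝ) ^ 2 - 1) / p * Real.exp (-x) := by
  have hp' : (1 : ℝ) ≤ p := by exact_mod_cast hp
  obtain ⟨hN0, hN⟩ := ellipticNumerator_mem_Icc hp' hx
  have hsx := Real.sinh_pos_iff.2 hx
  have hspx : 0 < Real.sinh (p * x) := Real.sinh_pos_iff.2 (by positivity)
  have hcx := Real.cosh_pos x
  rw [ellipticIntegrand_eq_ellipticNumerator_div hp hx, abs_of_nonneg (by positivity)]
  calc ellipticNumerator p x / (2 * p * Real.sinh (p * x) * Real.sinh x ^ 2 * Real.cosh x)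
      ≤ (p ^ 2 - 1) * x * (Real.sinh x * Real.sinh (p * x)) /
          (2 * p * Real.sinh (p * x) * Real.sinh x ^ 2 * Real.cosh x) := by gcongr
    _ = ((p : ℝ) ^ 2 - 1) / p * (x / Real.sinh (2 * x)) := by
        rw [Real.sinh_two_mul]
        field_simp
    _ ≤ ((p : ℝ) ^ 2 - 1) / p * Real.exp (-x) := by
        have hp2 : (0 : ℝ) ≤ (p ^ 2 - 1) / p := by
          have : (0 : ℝ) ≤ p ^ 2 - 1 := by nlinarith
          positivity
        gcongr
        rw [div_le_iff₀ (Real.sinh_pos_iff.2 (by positivity)), Real.exp_neg,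
          inv_mul_eq_div, le_div_iff₀ (Real.exp_pos x)]
        exact mul_exp_le_sinh_two_mul hx.le

lemma measurable_ellipticIntegrand (p : ℕ) : Measurable (ellipticIntegrand p) := by
  unfold ellipticIntegrand
  fun_prop

theorem elliptic_mellin_integrable (p : ℕ) (hp : 2 ≤ p) (s : ℂ) (hs : 0 < s.re) :
    MeasureTheory.IntegrableOn
      (fun x : ℝ => (x : ℂ) ^ (2 * s - 1) * (ellipticIntegrand p x : ℂ))
      (Set.Ioi (0 : ℝ)) := by
  refine integrableOn_cpow_mul_of_norm_le_exp (C := ((p : ℝ) ^ 2 - 1) / p)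
    (measurable_ellipticIntegrand p).complex_ofReal.aestronglyMeasurable (fun x hx => ?_)
    (by simpa using hs)
  rw [Complex.norm_real, Real.norm_eq_abs]
  exact abs_ellipticIntegrand_le (by omega) hx
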